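/- arXiv:1907.08880 — 2 statements merged into one kernel-verified Lean document; each statement's English description precedes it below -/
import Mathlib

section
/- Let A, B ∈ ℝ^{n×n} be symmetric matrices and η > 0, and let X̂ be the GRAMPA similarity matrix. Then: (i) X̂ is the unique minimizer over X ∈ ℝ^{n×n} of the strictly convex function (1/2)‖AX − XB‖_F² + (η²/2)‖X‖_F² − 1^T X 1; (ii) 1^T X̂ 1 > 0; and (iii) for α = n/(1^T X̂ 1) > 0, the matrix αX̂ is the minimizer of ‖AX − XB‖_F² + η²‖X‖_F² subject to the constraint 1^T X 1 = n. -/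
open MeasureTheory ProbabilityTheory Matrix Finset
open scoped NNReal ENNReal

noncomputable section

/-- `(lam, u)` is a spectral decomposition of the symmetric matrix `A`:
the vectors `u i` are orthonormal and `A = ∑ i, lam i • u i (u i)ᵀ`. -/
def IsSpectralDecomp {n : ℕ} (A : Matrix (Fin n) (Fin n) ℝ)
    (lam : Fin n → ℝ) (u : Fin n → Fin n → ℝ) : Prop :=
  (∀ i j, (∑ k, u i k * u j k) = if i = j then (1 : ℝ) else 0) ∧
  A = ∑ i, lam i • Matrix.vecMulVec (u i) (u i)

/-- The all-ones matrix `J`. -/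
def matJ (n : ℕ) : Matrix (Fin n) (Fin n) ℝ := Matrix.of fun _ _ => (1 : ℝ)

/-- The GRAMPA similarity matrix `X̂ = ∑_{i,j} (1/((λ_i − μ_j)² + η²)) u_i u_iᵀ J v_j v_jᵀ`
built from spectral data `(lam, u)` and `(mu, v)` with bandwidth `η`. -/
def grampa {n : ℕ} (η : ℝ) (lam mu : Fin n → ℝ) (u v : Fin n → Fin n → ℝ) :
    Matrix (Fin n) (Fin n) ℝ :=
  ∑ i, ∑ j, (1 / ((lam i - mu j) ^ 2 + η ^ 2)) •
    (Matrix.vecMulVec (u i) (u i) * matJ n * Matrix.vecMulVec (v j) (v j))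

/-- The squared Frobenius norm `‖X‖_F² = ∑_{i,j} X_{ij}²`. -/
def frobSq {n : ℕ} (X : Matrix (Fin n) (Fin n) ℝ) : ℝ := ∑ i, ∑ j, (X i j) ^ 2

/-- The objective `f(X) = (1/2)‖AX − XB‖_F² + (η²/2)‖X‖_F² − 1ᵀX1`. -/
def grampaObj {n : ℕ} (A B : Matrix (Fin n) (Fin n) ℝ) (η : ℝ)
    (X : Matrix (Fin n) (Fin n) ℝ) : ℝ :=
  (1 / 2) * frobSq (A * X - X * B) + (η ^ 2 / 2) * frobSq X - ∑ i, ∑ j, X i j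

/-- The regularized objective `g(X) = ‖AX − XB‖_F² + η²‖X‖_F²`. -/
def grampaRegObj {n : ℕ} (A B : Matrix (Fin n) (Fin n) ℝ) (η : ℝ)
    (X : Matrix (Fin n) (Fin n) ℝ) : ℝ :=
  frobSq (A * X - X * B) + η ^ 2 * frobSq X

namespace GrampaAux

variable {n : ℕ}

/-- Frobenius inner product. -/
def ip (X Y : Matrix (Fin n) (Fin n) ℝ) : ℝ := ∑ i, ∑ j, X i j * Y i j

lemma ip_comm (X Y : Matrix (Fin n) (Fin n) ℝ) : ip X Y = ip Y X := by
  unfold ip; congr 1; ext i; congr 1; ext j; ring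

lemma ip_add_right (X Y Z : Matrix (Fin n) (Fin n) ℝ) :
    ip X (Y + Z) = ip X Y + ip X Z := by
  simp [ip, mul_add, Finset.sum_add_distrib]

lemma ip_sub_right (X Y Z : Matrix (Fin n) (Fin n) ℝ) :
    ip X (Y - Z) = ip X Y - ip X Z := by
  simp [ip, mul_sub, Finset.sum_sub_distrib]

lemma ip_add_left (X Y Z : Matrix (Fin n) (Fin n) ℝ) :
    ip (X + Y) Z = ip X Z + ip Y Z := by
  simp [ip, add_mul, Finset.sum_add_distrib]

lemma ip_sub_left (X Y Z : Matrix (Fin n) (Fin n) ℝ) :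
    ip (X - Y) Z = ip X Z - ip Y Z := by
  simp [ip, sub_mul, Finset.sum_sub_distrib]

lemma ip_smul_left (c : ℝ) (X Y : Matrix (Fin n) (Fin n) ℝ) :
    ip (c • X) Y = c * ip X Y := by
  simp [ip, Finset.mul_sum, mul_assoc]

lemma frobSq_eq_ip (X : Matrix (Fin n) (Fin n) ℝ) : frobSq X = ip X X := by
  simp [frobSq, ip, sq]

lemma frobSq_nonneg (X : Matrix (Fin n) (Fin n) ℝ) : 0 ≤ frobSq X :=
  Finset.sum_nonneg fun _ _ => Finset.sum_nonneg fun _ _ => sq_nonneg _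

lemma frobSq_pos {X : Matrix (Fin n) (Fin n) ℝ} (h : X ≠ 0) : 0 < frobSq X := by
  rcases (frobSq_nonneg X).lt_or_eq with hlt | heq
  · exact hlt
  · exfalso; apply h
    ext i j
    have h1 := (Finset.sum_eq_zero_iff_of_nonneg
      (fun i _ => Finset.sum_nonneg fun j _ => sq_nonneg (X i j))).mp heq.symm i (by simp)
    have h2 := (Finset.sum_eq_zero_iff_of_nonneg
      (fun j _ => sq_nonneg (X i j))).mp h1 j (by simp)
    simpa using pow_eq_zero_iff (n := 2) (by norm_num) |>.mp h2

lemma ip_eq_trace (X Y : Matrix (Fin n) (Fin n) ℝ) : ip X Y = Matrix.trace (Xᵀ * Y) := by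
  unfold ip
  simp only [Matrix.trace, Matrix.diag_apply, Matrix.mul_apply, Matrix.transpose_apply]
  exact Finset.sum_comm

lemma ip_mulA (A X Y : Matrix (Fin n) (Fin n) ℝ) : ip (A * X) Y = ip X (Aᵀ * Y) := by
  rw [ip_eq_trace, ip_eq_trace, Matrix.transpose_mul, Matrix.mul_assoc]

lemma ip_mulB (B X Y : Matrix (Fin n) (Fin n) ℝ) : ip (X * B) Y = ip X (Y * Bᵀ) := by
  rw [ip_eq_trace, ip_eq_trace, Matrix.transpose_mul, Matrix.mul_assoc,
    Matrix.trace_mul_comm, Matrix.mul_assoc]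

/-- adjoint identity for the operator X ↦ AX - XB with symmetric A, B -/
lemma ip_adj {A B : Matrix (Fin n) (Fin n) ℝ} (hA : A.IsSymm) (hB : B.IsSymm)
    (M Y : Matrix (Fin n) (Fin n) ℝ) :
    ip M (A * Y - Y * B) = ip (A * M - M * B) Y := by
  rw [ip_comm, ip_sub_left, ip_mulA, ip_mulB, hA.eq, hB.eq, ip_sub_left,
    ip_comm (A * M), ip_comm (M * B)]

lemma sumEntries_eq_ip (X : Matrix (Fin n) (Fin n) ℝ) :
    (∑ i, ∑ j, X i j) = ip (matJ n) X := by
  simp [ip, matJ]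

lemma orth_sum {u : Fin n → Fin n → ℝ}
    (h : ∀ i j, (∑ k, u i k * u j k) = if i = j then (1 : ℝ) else 0) :
    (∑ i, Matrix.vecMulVec (u i) (u i)) = 1 := by
  have h1 : (Matrix.of u) * (Matrix.of u)ᵀ = 1 := by
    ext i j
    simpa [Matrix.mul_apply, Matrix.one_apply] using h i j
  have h2 : (Matrix.of u)ᵀ * (Matrix.of u) = 1 := mul_eq_one_comm.mp h1
  ext a b
  have := congrFun (congrFun h2 a) b
  simp only [Matrix.mul_apply, Matrix.transpose_apply, Matrix.of_apply] at this
  simp only [Matrix.sum_apply, Matrix.vecMulVec_apply]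
  rw [← this]

lemma A_mul_P {A : Matrix (Fin n) (Fin n) ℝ} {lam : Fin n → ℝ} {u : Fin n → Fin n → ℝ}
    (hd : IsSpectralDecomp A lam u) (i : Fin n) :
    A * Matrix.vecMulVec (u i) (u i) = lam i • Matrix.vecMulVec (u i) (u i) := by
  obtain ⟨ho, hEq⟩ := hd
  have hPP : ∀ k, Matrix.vecMulVec (u k) (u k) * Matrix.vecMulVec (u i) (u i)
      = if k = i then Matrix.vecMulVec (u i) (u i) else 0 := by
    intro k
    ext a b
    simp only [Matrix.mul_apply, Matrix.vecMulVec_apply]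
    have : (∑ m, u k a * u k m * (u i m * u i b))
        = (u k a * u i b) * ∑ m, u k m * u i m := by
      rw [Finset.mul_sum]; congr 1; ext m; ring
    rw [this, ho k i]
    by_cases hk : k = i <;> simp [hk, Matrix.vecMulVec_apply]
  rw [hEq, Matrix.sum_mul]
  simp only [Matrix.smul_mul, hPP, smul_ite, smul_zero]
  simp

lemma P_mul_B {B : Matrix (Fin n) (Fin n) ℝ} {mu : Fin n → ℝ} {v : Fin n → Fin n → ℝ}
    (hB : B.IsSymm) (hd : IsSpectralDecomp B mu v) (j : Fin n) :
    Matrix.vecMulVec (v j) (v j) * B = mu j • Matrix.vecMulVec (v j) (v j) := by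
  have h1 := A_mul_P hd j
  have hPt : (Matrix.vecMulVec (v j) (v j))ᵀ = Matrix.vecMulVec (v j) (v j) := by
    ext a b; simp [Matrix.vecMulVec_apply, mul_comm]
  calc Matrix.vecMulVec (v j) (v j) * B
      = (Bᵀ * (Matrix.vecMulVec (v j) (v j))ᵀ)ᵀ := by
        rw [← Matrix.transpose_mul, Matrix.transpose_transpose]
    _ = mu j • Matrix.vecMulVec (v j) (v j) := by
        rw [hB.eq, hPt, h1, Matrix.transpose_smul, hPt]



lemma lin_op {A B : Matrix (Fin n) (Fin n) ℝ} (hB : B.IsSymm)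
    {lam mu : Fin n → ℝ} {u v : Fin n → Fin n → ℝ}
    (hdA : IsSpectralDecomp A lam u) (hdB : IsSpectralDecomp B mu v)
    (coef : Fin n → Fin n → ℝ) :
    A * (∑ i, ∑ j, coef i j •
        (Matrix.vecMulVec (u i) (u i) * matJ n * Matrix.vecMulVec (v j) (v j)))
      - (∑ i, ∑ j, coef i j •
        (Matrix.vecMulVec (u i) (u i) * matJ n * Matrix.vecMulVec (v j) (v j))) * B
    = ∑ i, ∑ j, (coef i j * (lam i - mu j)) •
        (Matrix.vecMulVec (u i) (u i) * matJ n * Matrix.vecMulVec (v j) (v j)) := by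
  have hAT : ∀ i j : Fin n,
      A * (Matrix.vecMulVec (u i) (u i) * matJ n * Matrix.vecMulVec (v j) (v j))
      = lam i • (Matrix.vecMulVec (u i) (u i) * matJ n * Matrix.vecMulVec (v j) (v j)) := by
    intro i j
    rw [← Matrix.mul_assoc, ← Matrix.mul_assoc, A_mul_P hdA, Matrix.smul_mul,
      Matrix.smul_mul]
  have hTB : ∀ i j : Fin n,
      (Matrix.vecMulVec (u i) (u i) * matJ n * Matrix.vecMulVec (v j) (v j)) * B
      = mu j • (Matrix.vecMulVec (u i) (u i) * matJ n * Matrix.vecMulVec (v j) (v j)) := by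
    intro i j
    rw [Matrix.mul_assoc, P_mul_B hB hdB, Matrix.mul_smul]
  rw [Matrix.mul_sum, Matrix.sum_mul, ← Finset.sum_sub_distrib]
  refine Finset.sum_congr rfl fun i _ => ?_
  rw [Matrix.mul_sum, Matrix.sum_mul, ← Finset.sum_sub_distrib]
  refine Finset.sum_congr rfl fun j _ => ?_
  rw [Matrix.mul_smul, Matrix.smul_mul, hAT i j, hTB i j, smul_smul, smul_smul,
    ← sub_smul]
  congr 1
  ring

lemma sum_T {u v : Fin n → Fin n → ℝ}
    (hu : ∀ i j, (∑ k, u i k * u j k) = if i = j then (1 : ℝ) else 0)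
    (hv : ∀ i j, (∑ k, v i k * v j k) = if i = j then (1 : ℝ) else 0) :
    (∑ i, ∑ j : Fin n,
      (Matrix.vecMulVec (u i) (u i) * matJ n * Matrix.vecMulVec (v j) (v j)))
    = matJ n := by
  have : (∑ i, ∑ j : Fin n,
      (Matrix.vecMulVec (u i) (u i) * matJ n * Matrix.vecMulVec (v j) (v j)))
      = (∑ i, Matrix.vecMulVec (u i) (u i)) * matJ n
          * (∑ j, Matrix.vecMulVec (v j) (v j)) := by
    rw [Matrix.sum_mul, Matrix.sum_mul]
    refine Finset.sum_congr rfl fun i _ => ?_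
    rw [Matrix.mul_sum]
  rw [this, orth_sum hu, orth_sum hv, Matrix.one_mul, Matrix.mul_one]

lemma lop_grampa {A B : Matrix (Fin n) (Fin n) ℝ} (hA : A.IsSymm) (hB : B.IsSymm)
    {η : ℝ} (hη : 0 < η) {lam mu : Fin n → ℝ} {u v : Fin n → Fin n → ℝ}
    (hdA : IsSpectralDecomp A lam u) (hdB : IsSpectralDecomp B mu v) :
    A * (A * grampa η lam mu u v - grampa η lam mu u v * B)
      - (A * grampa η lam mu u v - grampa η lam mu u v * B) * B
      + η ^ 2 • grampa η lam mu u v = matJ n := by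
  have hd : ∀ i j, (lam i - mu j) ^ 2 + η ^ 2 ≠ 0 := fun i j =>
    ne_of_gt (by positivity)
  have h1 := lin_op hB hdA hdB (fun i j => 1 / ((lam i - mu j) ^ 2 + η ^ 2))
  rw [show grampa η lam mu u v = ∑ i, ∑ j,
      (fun i j => 1 / ((lam i - mu j) ^ 2 + η ^ 2)) i j •
      (Matrix.vecMulVec (u i) (u i) * matJ n * Matrix.vecMulVec (v j) (v j)) from rfl,
    h1, lin_op hB hdA hdB]
  rw [Finset.smul_sum, ← Finset.sum_add_distrib]
  refine Eq.trans ?_ (sum_T hdA.1 hdB.1)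
  refine Finset.sum_congr rfl fun i _ => ?_
  rw [Finset.smul_sum, ← Finset.sum_add_distrib]
  refine Finset.sum_congr rfl fun j _ => ?_
  rw [smul_smul, ← add_smul]
  rw [show (1 / ((lam i - mu j) ^ 2 + η ^ 2) * (lam i - mu j) * (lam i - mu j)
      + η ^ 2 * (1 / ((lam i - mu j) ^ 2 + η ^ 2))) = 1 by
    field_simp]
  rw [one_smul]

end GrampaAux

namespace GrampaAux2

open GrampaAux

variable {n : ℕ}

lemma ip_zero_left (X : Matrix (Fin n) (Fin n) ℝ) : ip 0 X = 0 := by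
  simp [ip]

lemma frobSq_add (X H : Matrix (Fin n) (Fin n) ℝ) :
    frobSq (X + H) = frobSq X + 2 * ip X H + frobSq H := by
  rw [frobSq_eq_ip, frobSq_eq_ip, frobSq_eq_ip, ip_add_left, ip_add_right,
    ip_add_right, ip_comm H X]
  ring

lemma split_AB (A B X H : Matrix (Fin n) (Fin n) ℝ) :
    A * (X + H) - (X + H) * B = (A * X - X * B) + (A * H - H * B) := by
  rw [Matrix.mul_add, Matrix.add_mul]
  abel

lemma regObj_expand {A B : Matrix (Fin n) (Fin n) ℝ} (hA : A.IsSymm) (hB : B.IsSymm)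
    (η : ℝ) (X H : Matrix (Fin n) (Fin n) ℝ) :
    grampaRegObj A B η (X + H) = grampaRegObj A B η X
      + 2 * ip (A * (A * X - X * B) - (A * X - X * B) * B + η ^ 2 • X) H
      + grampaRegObj A B η H := by
  rw [grampaRegObj, grampaRegObj, grampaRegObj, split_AB, frobSq_add, frobSq_add X H,
    ip_add_left, ip_smul_left, ← ip_adj hA hB (A * X - X * B) H]
  ring

lemma obj_expand {A B : Matrix (Fin n) (Fin n) ℝ} (hA : A.IsSymm) (hB : B.IsSymm)
    (η : ℝ) (X H : Matrix (Fin n) (Fin n) ℝ) :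
    grampaObj A B η (X + H) = grampaObj A B η X
      + ip (A * (A * X - X * B) - (A * X - X * B) * B + η ^ 2 • X - matJ n) H
      + (1 / 2) * grampaRegObj A B η H := by
  have hsum : (∑ i, ∑ j, (X + H) i j) = (∑ i, ∑ j, X i j) + ∑ i, ∑ j, H i j := by
    simp [Matrix.add_apply, Finset.sum_add_distrib]
  have hiprw : ip (A * (A * X - X * B) - (A * X - X * B) * B + η ^ 2 • X - matJ n) H
      = ip (A * X - X * B) (A * H - H * B) + η ^ 2 * ip X H - ∑ i, ∑ j, H i j := by
    rw [ip_sub_left, ip_add_left, ip_smul_left, ← ip_adj hA hB (A * X - X * B) H,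
      ← sumEntries_eq_ip]
  rw [grampaObj, grampaObj, grampaRegObj, split_AB, frobSq_add, frobSq_add X H, hsum,
    hiprw]
  ring

lemma regObj_nonneg (A B : Matrix (Fin n) (Fin n) ℝ) (η : ℝ)
    (X : Matrix (Fin n) (Fin n) ℝ) : 0 ≤ grampaRegObj A B η X := by
  unfold grampaRegObj
  have h1 := frobSq_nonneg (A * X - X * B)
  have h2 := frobSq_nonneg X
  nlinarith [sq_nonneg η]

lemma regObj_pos {A B : Matrix (Fin n) (Fin n) ℝ} {η : ℝ} (hη : 0 < η)
    {X : Matrix (Fin n) (Fin n) ℝ} (hX : X ≠ 0) : 0 < grampaRegObj A B η X := by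
  unfold grampaRegObj
  have h1 := frobSq_nonneg (A * X - X * B)
  have h2 := frobSq_pos hX
  nlinarith [pow_pos hη 2]

end GrampaAux2

/-- **GRAMPA as a regularized quadratic program.**
For symmetric `A, B` and `η > 0`, the GRAMPA similarity matrix `X̂` is
(i) the unique minimizer of the strictly convex function
`X ↦ (1/2)‖AX − XB‖_F² + (η²/2)‖X‖_F² − 1ᵀX1`;
(ii) `1ᵀX̂1 > 0`; and (iii) for `α = n/(1ᵀX̂1) > 0`, the matrix `αX̂` minimizes
`‖AX − XB‖_F² + η²‖X‖_F²` subject to `1ᵀX1 = n`. -/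
theorem grampa_is_regularized_qp_solution {n : ℕ} (hn : 0 < n)
    (A B : Matrix (Fin n) (Fin n) ℝ) (hA : A.IsSymm) (hB : B.IsSymm)
    (η : ℝ) (hη : 0 < η)
    (lam mu : Fin n → ℝ) (u v : Fin n → Fin n → ℝ)
    (hdA : IsSpectralDecomp A lam u) (hdB : IsSpectralDecomp B mu v) :
    (∀ Y : Matrix (Fin n) (Fin n) ℝ, Y ≠ grampa η lam mu u v →
        grampaObj A B η (grampa η lam mu u v) < grampaObj A B η Y) ∧
    (0 < ∑ i, ∑ j, grampa η lam mu u v i j) ∧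
    (∀ α : ℝ, α = (n : ℝ) / (∑ i, ∑ j, grampa η lam mu u v i j) →
      0 < α ∧
      (∑ i, ∑ j, (α • grampa η lam mu u v) i j) = (n : ℝ) ∧
      ∀ Y : Matrix (Fin n) (Fin n) ℝ, (∑ i, ∑ j, Y i j) = (n : ℝ) →
        grampaRegObj A B η (α • grampa η lam mu u v) ≤ grampaRegObj A B η Y) := by
  set G := grampa η lam mu u v with hGdef
  have hL : A * (A * G - G * B) - (A * G - G * B) * B + η ^ 2 • G = matJ n :=
    GrampaAux.lop_grampa hA hB hη hdA hdB
  have part1 : ∀ Y : Matrix (Fin n) (Fin n) ℝ, Y ≠ G →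
      grampaObj A B η G < grampaObj A B η Y := by
    intro Y hY
    have e : G + (Y - G) = Y := by abel
    have key := GrampaAux2.obj_expand hA hB η G (Y - G)
    rw [e, hL, sub_self, GrampaAux2.ip_zero_left] at key
    have hpos := GrampaAux2.regObj_pos (A := A) (B := B) (η := η) hη
      (sub_ne_zero.mpr hY)
    linarith [key]
  have hG0 : G ≠ 0 := by
    intro h0
    rw [h0] at hL
    simp only [Matrix.mul_zero, Matrix.zero_mul, smul_zero, sub_zero, sub_self,
      zero_add, add_zero] at hL
    have := congrFun (congrFun hL ⟨0, hn⟩) ⟨0, hn⟩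
    simp [matJ] at this
  have hs : (∑ i, ∑ j, G i j) = grampaRegObj A B η G := by
    rw [GrampaAux.sumEntries_eq_ip, ← hL, GrampaAux.ip_add_left,
      GrampaAux.ip_smul_left, ← GrampaAux.ip_adj hA hB (A * G - G * B) G,
      grampaRegObj, GrampaAux.frobSq_eq_ip, GrampaAux.frobSq_eq_ip]
  have hspos : 0 < ∑ i, ∑ j, G i j := by
    rw [hs]
    exact GrampaAux2.regObj_pos hη hG0
  refine ⟨part1, hspos, ?_⟩
  intro α hα
  have hαpos : 0 < α := by
    rw [hα]
    exact div_pos (Nat.cast_pos.mpr hn) hspos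
  have hsum : (∑ i, ∑ j, (α • G) i j) = (n : ℝ) := by
    have h1 : (∑ i, ∑ j, (α • G) i j) = α * ∑ i, ∑ j, G i j := by
      simp [Matrix.smul_apply, smul_eq_mul, Finset.mul_sum]
    rw [h1, hα, div_mul_cancel₀]
    exact ne_of_gt hspos
  refine ⟨hαpos, hsum, ?_⟩
  intro Y hY
  have e : α • G + (Y - α • G) = Y := by abel
  have key := GrampaAux2.regObj_expand hA hB η (α • G) (Y - α • G)
  rw [e] at key
  have hLα : A * (A * (α • G) - (α • G) * B) - (A * (α • G) - (α • G) * B) * B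
      + η ^ 2 • (α • G) = α • matJ n := by
    have h2 : A * (α • G) - (α • G) * B = α • (A * G - G * B) := by
      rw [Matrix.mul_smul, Matrix.smul_mul, smul_sub]
    rw [h2, Matrix.mul_smul, Matrix.smul_mul, ← smul_sub, smul_comm (η ^ 2) α,
      ← smul_add, hL]
  have hH0 : (∑ i, ∑ j, (Y - α • G) i j) = 0 := by
    simp only [Matrix.sub_apply, Finset.sum_sub_distrib]
    rw [hY, hsum, sub_self]
  rw [hLα] at key
  have hipz : GrampaAux.ip (α • matJ n) (Y - α • G) = 0 := by
    rw [GrampaAux.ip_smul_left, ← GrampaAux.sumEntries_eq_ip, hH0, mul_zero]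
  rw [hipz] at key
  have hnn := GrampaAux2.regObj_nonneg A B η (Y - α • G)
  linarith [key]

end
end

section
/- Let A, B ∈ ℝ^{n×n} be symmetric matrices, η > 0, γ > 0, and define the gradient descent iterates X^{(0)} = 0 and X^{(t+1)} = X^{(t)} − γ(A²X^{(t)} + X^{(t)}B² − 2AX^{(t)}B + η²X^{(t)} − J). Then for every t ≥ 0, X^{(t)} = Σ_{i,j=1}^n [(1 − (1 − γη² − γ(λ_i − μ_j)²)^t)/(η² + (λ_i − μ_j)²)] u_i u_i^T J v_j v_j^T. In particular, if γ < 1/(η² + (λ_i − μ_j)²) for all i, j ∈ [n], then X^{(t)} converges to the GRAMPA similarity matrix X̂ as t → ∞. -/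
/-! The matrices `P i j = u_i u_iᵀ J v_j v_jᵀ` satisfy `A P i j = λ_i P i j` and
`P i j B = μ_j P i j`, and they sum to `J` because both eigenbases are complete. Hence the
gradient step preserves the span of the `P i j` and acts on the coefficient of `P i j` as the
scalar iteration `c ↦ c - γ (d c - 1)` with `d = η² + (λ_i - μ_j)²`, started at `0`, whose
solution is `(1 - (1 - γ d)ᵗ) / d`; when `0 < γ d < 1` it converges to `1 / d`. -/

open MeasureTheory ProbabilityTheory Matrix Finset
open scoped NNReal ENNReal

noncomputable section

open Filter Topology

section Orthonormal

variable {m R : Type*} [Fintype m] [DecidableEq m] [CommRing R] {u : m → m → R}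

theorem vecMulVec_self_mul_vecMulVec_self
    (hu : ∀ i j, (∑ k, u i k * u j k) = if i = j then (1 : R) else 0) (i j : m) :
    vecMulVec (u i) (u i) * vecMulVec (u j) (u j)
      = if i = j then vecMulVec (u i) (u i) else 0 := by
  rw [vecMulVec_mul_vecMulVec, dotProduct, hu]
  split_ifs with h
  · subst h; rw [one_smul]
  · rw [zero_smul, vecMulVec_zero]

theorem sum_vecMulVec_self_eq_one
    (hu : ∀ i j, (∑ k, u i k * u j k) = if i = j then (1 : R) else 0) :
    ∑ i, vecMulVec (u i) (u i) = 1 := by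
  have hrows : of u * (of u)ᵀ = 1 := by
    ext i j
    simpa [mul_apply, one_apply] using hu i j
  have hcols : (of u)ᵀ * of u = 1 := mul_eq_one_comm.mp hrows
  rw [← hcols]
  ext k l
  simp [Matrix.sum_apply, mul_apply, vecMulVec_apply]

theorem sum_sum_vecMulVec_self_mul_mul_vecMulVec_self {n : Type*} [Fintype n] [DecidableEq n]
    {v : n → n → R} (hu : ∀ i j, (∑ k, u i k * u j k) = if i = j then (1 : R) else 0)
    (hv : ∀ i j, (∑ k, v i k * v j k) = if i = j then (1 : R) else 0) (M : Matrix m n R) :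
    ∑ i, ∑ j, vecMulVec (u i) (u i) * M * vecMulVec (v j) (v j) = M := by
  simp only [← Matrix.mul_sum, ← Matrix.sum_mul, sum_vecMulVec_self_eq_one hu,
    sum_vecMulVec_self_eq_one hv, Matrix.one_mul, Matrix.mul_one]

end Orthonormal

namespace IsSpectralDecomp

variable {n : ℕ} {A : Matrix (Fin n) (Fin n) ℝ} {lam : Fin n → ℝ} {u : Fin n → Fin n → ℝ}

theorem mul_vecMulVec_self (hd : IsSpectralDecomp A lam u) (i : Fin n) :
    A * vecMulVec (u i) (u i) = lam i • vecMulVec (u i) (u i) := by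
  simp_rw [hd.2, Finset.sum_mul, Matrix.smul_mul, vecMulVec_self_mul_vecMulVec_self hd.1,
    smul_ite, smul_zero, Finset.sum_ite_eq', Finset.mem_univ, if_true]

theorem vecMulVec_self_mul (hd : IsSpectralDecomp A lam u) (i : Fin n) :
    vecMulVec (u i) (u i) * A = lam i • vecMulVec (u i) (u i) := by
  simp_rw [hd.2, Finset.mul_sum, Matrix.mul_smul, vecMulVec_self_mul_vecMulVec_self hd.1,
    smul_ite, smul_zero, Finset.sum_ite_eq, Finset.mem_univ, if_true]

end IsSpectralDecomp

section Hessian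

variable {m n R : Type*} [Fintype m] [Fintype n] [CommRing R]
  {A : Matrix m m R} {B : Matrix n n R}

/-- For symmetric `A`, `B` this is the Hessian of the GRAMPA objective
`½‖AX - XB‖² + ½η²‖X‖² - ⟨J, X⟩`, whose gradient at `X` is `grampaHessian A B η X - J`. -/
def grampaHessian (A : Matrix m m R) (B : Matrix n n R) (η : R) :
    Matrix m n R →ₗ[R] Matrix m n R where
  toFun X := A * A * X + X * (B * B) - (2 : R) • (A * X * B) + η ^ 2 • X
  map_add' X Y := by
    simp only [Matrix.mul_add, Matrix.add_mul, smul_add]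
    abel
  map_smul' r X := by
    simp only [Matrix.mul_smul, Matrix.smul_mul, RingHom.id_apply]
    module

theorem grampaHessian_of_eigen {M : Matrix m n R} {α β : R}
    (hA : A * M = α • M) (hB : M * B = β • M) (η : R) :
    grampaHessian A B η M = (η ^ 2 + (α - β) ^ 2) • M := by
  have hAA : A * A * M = α ^ 2 • M := by
    rw [Matrix.mul_assoc, hA, Matrix.mul_smul, hA, smul_smul, sq]
  have hBB : M * (B * B) = β ^ 2 • M := by
    rw [← Matrix.mul_assoc, hB, Matrix.smul_mul, hB, smul_smul, sq]
  have hAB : A * M * B = (α * β) • M := by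
    rw [hA, Matrix.smul_mul, hB, smul_smul]
  change A * A * M + M * (B * B) - (2 : R) • (A * M * B) + η ^ 2 • M = _
  rw [hAA, hBB, hAB]
  module

end Hessian

theorem one_sub_pow_div_succ {K : Type*} [Field K] {d : K} (hd : d ≠ 0) (γ : K) (t : ℕ) :
    (1 - (1 - γ * d) ^ (t + 1)) / d
      = (1 - (1 - γ * d) ^ t) / d - γ * (d * ((1 - (1 - γ * d) ^ t) / d) - 1) := by
  field_simp
  ring

theorem tendsto_one_sub_pow_div {γ d : ℝ} (hγ : 0 < γ) (hd : 0 < d) (hγd : γ < 1 / d) :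
    Tendsto (fun t : ℕ => (1 - (1 - γ * d) ^ t) / d) atTop (𝓝 (1 / d)) := by
  have hrate : |1 - γ * d| < 1 := by
    have hlt : γ * d < 1 := (lt_div_iff₀ hd).mp hγd
    rw [abs_lt]
    constructor <;> nlinarith [mul_pos hγ hd]
  simpa using ((tendsto_pow_atTop_nhds_zero_of_abs_lt_one hrate).const_sub 1).div_const d

theorem gradient_iterate_eq_sum_smul {K V ι : Type*} [Field K] [AddCommGroup V] [Module K V]
    [Fintype ι] {L : V →ₗ[K] V} {P : ι → V} {d : ι → K} (hd : ∀ i, d i ≠ 0)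
    (hLP : ∀ i, L (P i) = d i • P i) {γ : K} {X : ℕ → V} (hX0 : X 0 = 0)
    (hrec : ∀ t, X (t + 1) = X t - γ • (L (X t) - ∑ i, P i)) (t : ℕ) :
    X t = ∑ i, ((1 - (1 - γ * d i) ^ t) / d i) • P i := by
  induction t with
  | zero => simp [hX0]
  | succ t ih =>
    simp only [hrec, ih, map_sum, map_smul, hLP, smul_smul, Finset.smul_sum,
      ← Finset.sum_sub_distrib]
    refine Finset.sum_congr rfl fun i _ => ?_
    rw [one_sub_pow_div_succ (hd i)]
    module

theorem grampa_gradient_descent_closed_form_general {n : ℕ}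
    (A B : Matrix (Fin n) (Fin n) ℝ)
    (η γ : ℝ) (hη : 0 < η) (hγ : 0 < γ)
    (lam mu : Fin n → ℝ) (u v : Fin n → Fin n → ℝ)
    (hdA : IsSpectralDecomp A lam u) (hdB : IsSpectralDecomp B mu v)
    (X : ℕ → Matrix (Fin n) (Fin n) ℝ)
    (hX0 : X 0 = 0)
    (hXrec : ∀ t, X (t + 1) =
      X t - γ • (A * A * X t + X t * (B * B) - (2 : ℝ) • (A * X t * B)
        + η ^ 2 • X t - matJ n)) :
    (∀ t, X t = ∑ i, ∑ j,
        ((1 - (1 - γ * η ^ 2 - γ * (lam i - mu j) ^ 2) ^ t) /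
            (η ^ 2 + (lam i - mu j) ^ 2)) •
          (Matrix.vecMulVec (u i) (u i) * matJ n * Matrix.vecMulVec (v j) (v j))) ∧
    ((∀ i j, γ < 1 / (η ^ 2 + (lam i - mu j) ^ 2)) →
      ∀ k l, Filter.Tendsto (fun t => X t k l) Filter.atTop
        (nhds (grampa η lam mu u v k l))) := by
  set P : Fin n → Fin n → Matrix (Fin n) (Fin n) ℝ := fun i j =>
    vecMulVec (u i) (u i) * matJ n * vecMulVec (v j) (v j) with hP
  have hAP : ∀ i j, A * P i j = lam i • P i j := fun i j => by
    simp only [hP, ← Matrix.mul_assoc, hdA.mul_vecMulVec_self, Matrix.smul_mul]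
  have hPB : ∀ i j, P i j * B = mu j • P i j := fun i j => by
    simp only [hP, Matrix.mul_assoc, hdB.vecMulVec_self_mul, Matrix.mul_smul]
  have hJ : matJ n = ∑ p : Fin n × Fin n, P p.1 p.2 := by
    rw [Fintype.sum_prod_type', sum_sum_vecMulVec_self_mul_mul_vecMulVec_self hdA.1 hdB.1]
  have hd : ∀ i j, 0 < η ^ 2 + (lam i - mu j) ^ 2 := fun i j => by positivity
  have hrate : ∀ i j, 1 - γ * η ^ 2 - γ * (lam i - mu j) ^ 2
      = 1 - γ * (η ^ 2 + (lam i - mu j) ^ 2) := fun i j => by ring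
  have hrec : ∀ t, X (t + 1) =
      X t - γ • (grampaHessian A B η (X t) - ∑ p : Fin n × Fin n, P p.1 p.2) := by
    rw [← hJ]
    exact hXrec
  have hclosed := gradient_iterate_eq_sum_smul (fun p : Fin n × Fin n => (hd p.1 p.2).ne')
    (fun p : Fin n × Fin n => grampaHessian_of_eigen (hAP p.1 p.2) (hPB p.1 p.2) η) hX0 hrec
  simp only [Fintype.sum_prod_type, ← hrate] at hclosed
  refine ⟨hclosed, fun hγd k l => ?_⟩
  have hlim : Tendsto X atTop (𝓝 (grampa η lam mu u v)) := by
    simp only [funext hclosed, grampa, hrate, add_comm _ (η ^ 2)]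
    refine tendsto_finsetSum _ fun i _ => tendsto_finsetSum _ fun j _ => ?_
    exact (tendsto_one_sub_pow_div hγ (hd i j) (hγd i j)).smul_const _
  exact tendsto_pi_nhds.1 (tendsto_pi_nhds.1 hlim k) l

/-- **Closed form and convergence of gradient descent for GRAMPA.**
For the gradient descent iterates `X⁽⁰⁾ = 0`,
`X⁽ᵗ⁺¹⁾ = X⁽ᵗ⁾ − γ(A²X⁽ᵗ⁾ + X⁽ᵗ⁾B² − 2AX⁽ᵗ⁾B + η²X⁽ᵗ⁾ − J)`, every iterate has the
closed spectral form
`X⁽ᵗ⁾ = ∑_{i,j} [(1 − (1 − γη² − γ(λ_i − μ_j)²)ᵗ)/(η² + (λ_i − μ_j)²)] u_i u_iᵀ J v_j v_jᵀ`;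
and if `γ < 1/(η² + (λ_i − μ_j)²)` for all `i, j` then `X⁽ᵗ⁾ → X̂` (entrywise)
as `t → ∞`, where `X̂` is the GRAMPA similarity matrix. -/
theorem grampa_gradient_descent_closed_form {n : ℕ}
    (A B : Matrix (Fin n) (Fin n) ℝ) (hA : A.IsSymm) (hB : B.IsSymm)
    (η γ : ℝ) (hη : 0 < η) (hγ : 0 < γ)
    (lam mu : Fin n → ℝ) (u v : Fin n → Fin n → ℝ)
    (hdA : IsSpectralDecomp A lam u) (hdB : IsSpectralDecomp B mu v)
    (X : ℕ → Matrix (Fin n) (Fin n) ℝ)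
    (hX0 : X 0 = 0)
    (hXrec : ∀ t, X (t + 1) =
      X t - γ • (A * A * X t + X t * (B * B) - (2 : ℝ) • (A * X t * B)
        + η ^ 2 • X t - matJ n)) :
    (∀ t, X t = ∑ i, ∑ j,
        ((1 - (1 - γ * η ^ 2 - γ * (lam i - mu j) ^ 2) ^ t) /
            (η ^ 2 + (lam i - mu j) ^ 2)) •
          (Matrix.vecMulVec (u i) (u i) * matJ n * Matrix.vecMulVec (v j) (v j))) ∧
    ((∀ i j, γ < 1 / (η ^ 2 + (lam i - mu j) ^ 2)) →
      ∀ k l, Filter.Tendsto (fun t => X t k l) Filter.atTop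
        (nhds (grampa η lam mu u v k l))) :=
  grampa_gradient_descent_closed_form_general A B η γ hη hγ lam mu u v hdA hdB X hX0 hXrec

end
end
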